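/- Let m ≥ 1 and let T(t,m) be the exponential tree whose seed T(0,m) is a single edge on two vertices. Then for every t ≥ 1, the geodesic distance (Wiener index) of T(t,m) equals (m+1)^{t−1}·(2 + (4mt + m − 1)(m+1)^t). -/

import Mathlib

/-!
Attaching leaves changes distances transparently: for distinct vertices `a ≠ b` of the new tree,
`d(a, b) = d(root a, root b) + level a + level b`, where `root` is the old vertex a vertex hangs
from and `level` is `1` on the new leaves. A walk through the roots gives `≤`; `≥` holds because
the right-hand side drops by at most one along every edge. Summing over ordered pairs gives the
recursion `D' + 2mN = (m+1)² D + 2(m+1)mN²` for `D = ∑∑ d` and `N = |V|`, which from the single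
edge (`D = N = 2`) solves to twice the stated closed form.
-/

/-- A finite simple graph, bundled with its (finite) vertex type. -/
structure FinSimpleGraph where
  V : Type
  fV : Fintype V
  G : SimpleGraph V

attribute [instance] FinSimpleGraph.fV

/-- The geodesic distance (Wiener index) of a finite simple graph: the sum of the graph
distances over all unordered pairs of distinct vertices. -/
noncomputable def wienerIndex {V : Type} [Fintype V] (G : SimpleGraph V) : ℕ :=
  (∑ u : V, ∑ v : V, G.dist u v) / 2

/-- One step of the exponential-tree construction: attach `m` new leaf vertices to every
vertex.  The new vertex set is `V ⊕ (V × Fin m)`, where `(v, j)` is adjacent exactly to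
`v`, and the adjacency on the `V` component is unchanged. -/
def expTreeStep (m : ℕ) (X : FinSimpleGraph) : FinSimpleGraph :=
  { V := X.V ⊕ (X.V × Fin m), fV := inferInstance,
    G := SimpleGraph.fromRel fun a b =>
      match a, b with
      | Sum.inl u, Sum.inl v => X.G.Adj u v
      | Sum.inl u, Sum.inr (v, _) => u = v
      | _, _ => False }

/-- The exponential tree `T(t,m)` obtained from the seed after `t` steps. -/
def expTreeIter (m : ℕ) (X : FinSimpleGraph) : ℕ → FinSimpleGraph
  | 0 => X
  | t + 1 => expTreeStep m (expTreeIter m X t)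

theorem SimpleGraph.Reachable.le_dist_of_adj_le_add_one {V : Type*} {G : SimpleGraph V}
    {f : V → ℕ} {a b : V} (hb : f b = 0) (hf : ∀ x y, G.Adj x y → f x ≤ f y + 1)
    (hab : G.Reachable a b) : f a ≤ G.dist a b := by
  obtain ⟨p, hp⟩ := hab.exists_walk_length_eq_dist
  rw [← hp]
  clear hp hab
  induction p with
  | nil => simp [hb]
  | cons hxy q ih =>
    rw [SimpleGraph.Walk.length_cons]
    exact (hf _ _ hxy).trans (by have := ih hb; omega)

noncomputable def distSum {V : Type} [Fintype V] (G : SimpleGraph V) : ℕ :=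
  ∑ u : V, ∑ v : V, G.dist u v

namespace expTreeStep

variable {m : ℕ} {X : FinSimpleGraph}

def root : (expTreeStep m X).V → X.V := Sum.elim id Prod.fst

def level : (expTreeStep m X).V → ℕ := Sum.elim (fun _ => 0) (fun _ => 1)

def inlHom : X.G →g (expTreeStep m X).G where
  toFun := Sum.inl
  map_rel' h := by simpa [expTreeStep] using ⟨h.ne, .inl h⟩

def walkToRoot : (a : (expTreeStep m X).V) → (expTreeStep m X).G.Walk a (inlHom (root a))
  | Sum.inl _ => .nil
  | Sum.inr (_, _) => .cons ((SimpleGraph.fromRel_adj _ _ _).2 ⟨Sum.inr_ne_inl, .inr rfl⟩) .nil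

theorem length_walkToRoot (a : (expTreeStep m X).V) : (walkToRoot a).length = level a := by
  rcases a with _ | ⟨_, _⟩ <;> rfl

theorem exists_walk_length_eq (hX : X.G.Connected) (a b : (expTreeStep m X).V) :
    ∃ p : (expTreeStep m X).G.Walk a b,
      p.length = X.G.dist (root a) (root b) + level a + level b := by
  obtain ⟨w, hw⟩ := hX.exists_walk_length_eq_dist (root a) (root b)
  refine ⟨(walkToRoot a).append ((w.map inlHom).append (walkToRoot b).reverse), ?_⟩
  rw [SimpleGraph.Walk.length_append, SimpleGraph.Walk.length_append,
    SimpleGraph.Walk.length_reverse, SimpleGraph.Walk.length_map, length_walkToRoot,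
    length_walkToRoot, hw]
  ring

theorem connected (hX : X.G.Connected) : (expTreeStep m X).G.Connected := by
  obtain ⟨v⟩ := hX.nonempty
  have : Nonempty (expTreeStep m X).V := ⟨.inl v⟩
  exact ⟨fun a b => ⟨(exists_walk_length_eq hX a b).choose⟩⟩

theorem dist_root_add_level_le_of_adj (hX : X.G.Connected) {a c : (expTreeStep m X).V}
    (hac : (expTreeStep m X).G.Adj a c) (y : X.V) :
    X.G.dist (root a) y + level a + level c ≤ X.G.dist (root c) y + 1 := by
  rcases a with u | ⟨u, i⟩ <;> rcases c with v | ⟨v, j⟩ <;>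
    simp only [expTreeStep, SimpleGraph.fromRel_adj, ne_eq, Sum.inl.injEq, Sum.inr.injEq,
      Prod.mk.injEq, reduceCtorEq, not_false_eq_true, not_and, true_and, or_false, false_or,
      or_self, and_false, root, level, Sum.elim_inl, Sum.elim_inr, id_eq, add_zero,
      add_le_add_iff_right] at hac ⊢
  case inl.inl =>
    have huv : X.G.dist u v = 1 := SimpleGraph.dist_eq_one_iff_adj.2 (hac.2.elim id .symm)
    linarith [hX.dist_triangle (u := u) (v := v) (w := y)]
  all_goals simp [hac]

theorem dist_eq (hX : X.G.Connected) {a b : (expTreeStep m X).V} (hab : a ≠ b) :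
    (expTreeStep m X).G.dist a b = X.G.dist (root a) (root b) + level a + level b := by
  classical
  obtain ⟨p, hp⟩ := exists_walk_length_eq hX a b
  refine le_antisymm (hp ▸ SimpleGraph.dist_le p) ?_
  let f x := if x = b then 0 else X.G.dist (root x) (root b) + level x + level b
  suffices f a ≤ (expTreeStep m X).G.dist a b by simpa [f, hab] using this
  refine (connected hX a b).le_dist_of_adj_le_add_one (by simp [f]) fun x y hxy => ?_
  have := dist_root_add_level_le_of_adj hX hxy (root b)
  by_cases hx : x = b <;> by_cases hy : y = b <;> simp [f, hx, hy] at this ⊢ <;> omega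

theorem dist_add_ite_eq (hX : X.G.Connected) (a b : (expTreeStep m X).V) [Decidable (a = b)] :
    (expTreeStep m X).G.dist a b + (if a = b then 2 * level a else 0)
      = X.G.dist (root a) (root b) + level a + level b := by
  by_cases hab : a = b
  · subst hab
    simp only [SimpleGraph.dist_self, if_true]
    ring
  · rw [dist_eq hX hab, if_neg hab, add_zero]

theorem sum_root {M : Type*} [AddCommMonoid M] (g : X.V → M) :
    ∑ a : (expTreeStep m X).V, g (root a) = (m + 1) • ∑ u, g u := by
  change ∑ a : X.V ⊕ (X.V × Fin m), g (root a) = _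
  simp only [Fintype.sum_sum_type, Fintype.sum_prod_type, root, Sum.elim_inl, Sum.elim_inr, id,
    Finset.sum_const, Finset.card_univ, Fintype.card_fin, ← Finset.smul_sum]
  rw [succ_nsmul', ← Finset.sum_nsmul]

theorem sum_sum_root {M : Type*} [AddCommMonoid M] (g : X.V → X.V → M) :
    ∑ a : (expTreeStep m X).V, ∑ b : (expTreeStep m X).V, g (root a) (root b)
      = (m + 1) ^ 2 • ∑ u, ∑ v, g u v := by
  rw [Finset.sum_congr rfl fun a _ => sum_root (g (root a)), ← Finset.smul_sum,
    sum_root fun u => ∑ v, g u v, smul_smul, sq]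

theorem sum_level : ∑ a : (expTreeStep m X).V, level a = m * Fintype.card X.V := by
  change ∑ a : X.V ⊕ (X.V × Fin m), level a = _
  simp [Fintype.sum_sum_type, level, mul_comm]

theorem card_V : Fintype.card (expTreeStep m X).V = (m + 1) * Fintype.card X.V := by
  change Fintype.card (X.V ⊕ (X.V × Fin m)) = _
  simp only [Fintype.card_sum, Fintype.card_prod, Fintype.card_fin]
  ring

theorem distSum_add (hX : X.G.Connected) :
    distSum (expTreeStep m X).G + 2 * (m * Fintype.card X.V)
      = (m + 1) ^ 2 * distSum X.G
        + 2 * ((m + 1) * Fintype.card X.V) * (m * Fintype.card X.V) := by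
  classical
  calc distSum (expTreeStep m X).G + 2 * (m * Fintype.card X.V)
      = ∑ a : (expTreeStep m X).V, ∑ b : (expTreeStep m X).V,
          ((expTreeStep m X).G.dist a b + if a = b then 2 * level a else 0) := by
        simp only [distSum, Finset.sum_add_distrib, Finset.sum_ite_eq, Finset.mem_univ, if_true,
          ← Finset.mul_sum, sum_level]
    _ = ∑ a : (expTreeStep m X).V, ∑ b : (expTreeStep m X).V,
          (X.G.dist (root a) (root b) + level a + level b) := by
        simp only [dist_add_ite_eq hX]
    _ = _ := by
        simp only [Finset.sum_add_distrib, sum_sum_root X.G.dist, Finset.sum_const,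
          Finset.card_univ, smul_eq_mul, ← Finset.mul_sum, sum_level, card_V]
        rw [distSum]
        ring

end expTreeStep

section expTreeIter

variable {m : ℕ} {X : FinSimpleGraph}

theorem expTreeIter_connected (hX : X.G.Connected) (t : ℕ) :
    (expTreeIter m X t).G.Connected := by
  induction t with
  | zero => exact hX
  | succ t ih => exact expTreeStep.connected ih

theorem card_expTreeIter (t : ℕ) :
    Fintype.card (expTreeIter m X t).V = (m + 1) ^ t * Fintype.card X.V := by
  induction t with
  | zero => rw [pow_zero, one_mul]; rfl
  | succ t ih =>
    rw [expTreeIter, expTreeStep.card_V, ih]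
    ring

end expTreeIter

def edgeGraph : FinSimpleGraph := ⟨Fin 2, inferInstance, SimpleGraph.pathGraph 2⟩

theorem distSum_pathGraph_two : distSum (SimpleGraph.pathGraph 2) = 2 := by
  have h : (SimpleGraph.pathGraph 2).Adj 0 1 := by simp [SimpleGraph.pathGraph_adj]
  simp [distSum, Fin.sum_univ_two, SimpleGraph.dist_eq_one_iff_adj.2 h,
    SimpleGraph.dist_eq_one_iff_adj.2 h.symm]

theorem distSum_expTreeIter_edgeGraph (m t : ℕ) :
    (m + 1) * distSum (expTreeIter m edgeGraph t).G + 2 * (m + 1) ^ (2 * t)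
      = 2 * (m + 1) ^ t * (2 + (4 * m * t + m) * (m + 1) ^ t) := by
  induction t with
  | zero =>
    rw [expTreeIter, edgeGraph, distSum_pathGraph_two]
    ring
  | succ t ih =>
    have step := expTreeStep.distSum_add (m := m)
      (expTreeIter_connected (X := edgeGraph) (m := m) (SimpleGraph.pathGraph_connected 1) t)
    rw [card_expTreeIter, show Fintype.card edgeGraph.V = 2 from Fintype.card_fin 2] at step
    rw [expTreeIter]
    linear_combination (m + 1) * step + (m + 1) ^ 2 * ih

/-- For `m ≥ 1` and the exponential tree `T(t,m)` whose seed is a single edge on two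
vertices, the Wiener index of `T(t,m)` for `t ≥ 1` equals
`(m+1)^{t−1}·(2 + (4mt + m − 1)(m+1)^t)`. -/
theorem wiener_expTree_edge (m t : ℕ) (hm : 1 ≤ m) (ht : 1 ≤ t) :
    wienerIndex (expTreeIter m ⟨Fin 2, inferInstance, SimpleGraph.pathGraph 2⟩ t).G =
      (m + 1) ^ (t - 1) * (2 + (4 * m * t + m - 1) * (m + 1) ^ t) := by
  obtain ⟨k, rfl⟩ : ∃ k, m = k + 1 := ⟨m - 1, by omega⟩
  obtain ⟨s, rfl⟩ : ∃ s, t = s + 1 := ⟨t - 1, by omega⟩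
  have closed := distSum_expTreeIter_edgeGraph (k + 1) (s + 1)
  have hD : distSum (expTreeIter (k + 1) edgeGraph (s + 1)).G
      = 2 * ((k + 2) ^ s * (2 + (4 * (k + 1) * (s + 1) + k) * (k + 2) ^ (s + 1))) := by
    refine Nat.eq_of_mul_eq_mul_left (show 0 < k + 2 by omega) ?_
    linear_combination closed
  change distSum (expTreeIter (k + 1) edgeGraph (s + 1)).G / 2 = _
  rw [hD, Nat.mul_div_cancel_left _ two_pos]
  congr 3
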